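/- arXiv:0910.1699 — 3 statements merged into one kernel-verified Lean document; each statement's English description precedes it below -/
import Mathlib

section
/- Let p be a prime, G a finite p-group, k = ZMod p, and kG the group algebra MonoidAlgebra k G with Jacobson radical J. Let A be a finite type and φ : FreeAlgebra k A →ₐ[k] kG a surjective k-algebra homomorphism with φ(x_a) ∈ J for every generator x_a. Let ≤ be an admissible linear order on the free monoid M of words in A, and call a word w a tip if φ(w) lies in the k-span of {φ(v) : v < w}, and a nontip otherwise. Then the family (φ(w))_{w a nontip} is a k-basis of kG. -/
/-! `kG` is finite, hence Artinian, so its Jacobson radical is nilpotent: words longer than its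
nilpotency index map to `0`, and only finitely many words have a nonzero image. On that finite set
the order is well founded, so a minimal word whose image escapes the span of the nontip images would
be a tip, i.e. lie in the span of smaller images, a contradiction; by surjectivity the nontips span.
Independence is the leading-term argument: the largest nontip in a relation would be a tip. -/

/-- The monomial in the free algebra corresponding to a word in the free monoid. -/
noncomputable def wordMonomial (k : Type*) [CommRing k] {A : Type*} (w : FreeMonoid A) :
    FreeAlgebra k A :=
  FreeMonoid.lift (FreeAlgebra.ι k) w

open Submodule

section Nontips

variable (k : Type*) {V ι : Type*} [LinearOrder ι]

def nontips [Semiring k] [AddCommMonoid V] [Module k V] (f : ι → V) : Set ι :=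
  {i | f i ∉ span k (f '' Set.Iio i)}

theorem linearIndepOn_nontips [DivisionRing k] [AddCommGroup V] [Module k V] (f : ι → V) :
    LinearIndepOn k f (nontips k f) := by
  classical
  refine linearIndepOn_of_finite _ fun t hts ht => ?_
  lift t to Finset ι using ht
  induction t using Finset.induction_on_max with
  | empty => simp
  | insert i t hlt ih =>
    rw [Finset.coe_insert] at hts ⊢
    refine (ih ((Set.subset_insert _ _).trans hts)).insert fun hi => hts (Set.mem_insert _ _) ?_
    exact span_mono (Set.image_mono fun j hj => hlt j hj) hi

theorem span_image_nontips [Semiring k] [AddCommMonoid V] [Module k V] (f : ι → V)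
    (hf : (Function.support f).Finite) : span k (f '' nontips k f) = span k (Set.range f) := by
  set T := span k (f '' nontips k f)
  refine le_antisymm (span_mono (Set.image_subset_range _ _)) (span_le.2 ?_)
  rintro _ ⟨i, rfl⟩
  by_contra hi
  have hbad : {j | f j ∉ T}.Finite := hf.subset fun j hj hj0 => hj (hj0 ▸ T.zero_mem)
  obtain ⟨i₀, hi₀, hmin⟩ := Set.exists_min_image _ id hbad ⟨i, hi⟩
  refine hi₀ (span_le.2 ?_ (not_not.1 fun h => hi₀ (subset_span ⟨i₀, h, rfl⟩)))
  rintro _ ⟨j, hj, rfl⟩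
  exact not_not.1 fun h => (hmin j h).not_gt hj

end Nontips

section FreeAlgebra

variable {k A R : Type*} [CommRing k] [Ring R] [Algebra k R] (φ : FreeAlgebra k A →ₐ[k] R)

theorem map_wordMonomial_mem_pow {I : Ideal R} [I.IsTwoSided]
    (hI : ∀ a, φ (FreeAlgebra.ι k a) ∈ I) (w : FreeMonoid A) :
    φ (wordMonomial k w) ∈ I ^ w.length := by
  induction w using FreeMonoid.inductionOn' with
  | one => simp [wordMonomial, Submodule.pow_zero, Ideal.one_eq_top]
  | of_mul a w ih =>
    rw [wordMonomial, map_mul, FreeMonoid.lift_eval_of, map_mul, FreeMonoid.length_mul,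
      FreeMonoid.length_of, add_comm, Ideal.IsTwoSided.pow_succ]
    exact Ideal.mul_mem_mul (hI a) ih

theorem finite_support_map_wordMonomial [Finite A] [IsArtinianRing R]
    (hrad : ∀ a, φ (FreeAlgebra.ι k a) ∈ (⊥ : Ideal R).jacobson) :
    (Function.support fun w => φ (wordMonomial k w)).Finite := by
  obtain ⟨n, hn⟩ := IsArtinianRing.isNilpotent_jacobson_bot (R := R)
  refine (List.finite_length_lt A n).subset fun w hw =>
    show w.length < n from not_le.1 fun hnw => hw ?_
  have := Ideal.pow_le_pow_right hnw (map_wordMonomial_mem_pow φ hrad w)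
  rwa [hn, Ideal.zero_eq_bot, Ideal.mem_bot] at this

theorem span_range_wordMonomial :
    span k (Set.range (wordMonomial k : FreeMonoid A → _)) = ⊤ := by
  convert (FreeAlgebra.basisFreeMonoid k A).span_eq
  ext w
  simp [wordMonomial, FreeAlgebra.basisFreeMonoid, FreeAlgebra.equivMonoidAlgebraFreeMonoid]

theorem span_range_map_wordMonomial (hφ : Function.Surjective φ) :
    span k (Set.range fun w => φ (wordMonomial k w)) = ⊤ := by
  rw [← Function.comp_def, Set.range_comp, ← AlgHom.coe_toLinearMap, span_image,
    span_range_wordMonomial, Submodule.map_top, LinearMap.range_eq_top]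
  exact hφ

end FreeAlgebra

theorem nontips_form_basis_general
    (p : ℕ) (hp : p.Prime) (G : Type*) [Group G] [Fintype G]
    (A : Type*) [Finite A]
    (φ : FreeAlgebra (ZMod p) A →ₐ[ZMod p] MonoidAlgebra (ZMod p) G)
    (hsurj : Function.Surjective φ)
    (hrad : ∀ a : A, φ (FreeAlgebra.ι (ZMod p) a) ∈
      (⊥ : Ideal (MonoidAlgebra (ZMod p) G)).jacobson)
    (lo : LinearOrder (FreeMonoid A))
    -- a word is a tip if its image lies in the span of the images of smaller words
    (IsTip : FreeMonoid A → Prop)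
    (hTip : ∀ w, IsTip w ↔ φ (wordMonomial (ZMod p) w) ∈
      Submodule.span (ZMod p) ((fun v => φ (wordMonomial (ZMod p) v)) '' {v | lo.lt v w})) :
    LinearIndependent (ZMod p)
      (fun w : {w : FreeMonoid A // ¬ IsTip w} => φ (wordMonomial (ZMod p) w.1)) ∧
    Submodule.span (ZMod p)
      (Set.range (fun w : {w : FreeMonoid A // ¬ IsTip w} =>
        φ (wordMonomial (ZMod p) w.1))) = ⊤ := by
  have : Fact p.Prime := ⟨hp⟩
  let _ := lo
  have := IsArtinianRing.of_finite (ZMod p) (MonoidAlgebra (ZMod p) G)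
  obtain rfl := funext fun w => propext (hTip w)
  refine ⟨linearIndepOn_nontips _ _, ?_⟩
  have hspan := span_image_nontips (ZMod p) _ (finite_support_map_wordMonomial φ hrad)
  rw [Set.image_eq_range, span_range_map_wordMonomial φ hsurj] at hspan
  exact hspan

/-- For a finite `p`-group `G`, `k = ZMod p`, a surjection
`φ : FreeAlgebra k A →ₐ[k] kG` with all generators landing in the Jacobson radical,
and an admissible linear order on the free monoid of words in `A`, the images of the
nontips form a `k`-basis of the group algebra `kG`. -/
theorem nontips_form_basis
    (p : ℕ) (hp : p.Prime) (G : Type*) [Group G] [Fintype G] (hG : IsPGroup p G)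
    (A : Type*) [Finite A]
    (φ : FreeAlgebra (ZMod p) A →ₐ[ZMod p] MonoidAlgebra (ZMod p) G)
    (hsurj : Function.Surjective φ)
    (hrad : ∀ a : A, φ (FreeAlgebra.ι (ZMod p) a) ∈
      (⊥ : Ideal (MonoidAlgebra (ZMod p) G)).jacobson)
    (lo : LinearOrder (FreeMonoid A))
    (hadm : ∀ u v₁ v₂ w : FreeMonoid A, lo.le v₁ v₂ →
      lo.le (u * v₁ * w) (u * v₂ * w))
    -- a word is a tip if its image lies in the span of the images of smaller words
    (IsTip : FreeMonoid A → Prop)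
    (hTip : ∀ w, IsTip w ↔ φ (wordMonomial (ZMod p) w) ∈
      Submodule.span (ZMod p) ((fun v => φ (wordMonomial (ZMod p) v)) '' {v | lo.lt v w})) :
    LinearIndependent (ZMod p)
      (fun w : {w : FreeMonoid A // ¬ IsTip w} => φ (wordMonomial (ZMod p) w.1)) ∧
    Submodule.span (ZMod p)
      (Set.range (fun w : {w : FreeMonoid A // ¬ IsTip w} =>
        φ (wordMonomial (ZMod p) w.1))) = ⊤ :=
  nontips_form_basis_general p hp G A φ hsurj hrad lo IsTip hTip
end

section
/- Let p be a prime, G a finite p-group of order p^n, k = ZMod p, kG the group algebra with Jacobson radical J, and for r ≥ 1 let F_r = {g ∈ G : (g : kG) - 1 ∈ J^r} be the r-th dimension subgroup. Let g_1, …, g_n be Jennings pc-generators for G. Then for each 1 ≤ i ≤ n, g_i^p lies in the subgroup generated by {g_{i+1}, …, g_n}; and for all 1 ≤ i < j ≤ n, the commutator ⁅g_i, g_j⁆ lies in the subgroup generated by {g_{j+1}, …, g_n}. -/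
open scoped commutatorElement

/-!
If `x - 1 ∈ J^a` and `y - 1 ∈ J^b` in `k[G]`, then `x^p - 1 = (x - 1)^p ∈ J^(ap)` in
characteristic `p`, and `⁅x, y⁆ - 1 = ((x - 1)(y - 1) - (y - 1)(x - 1)) x⁻¹y⁻¹ ∈ J^(a+b)`.
So `g i ^ p` and `⁅g i, g j⁆` lie in a dimension subgroup of depth greater than `d i`,
resp. `d j`. Since `J` is nilpotent the dimension subgroups vanish from some point on, and a
downward induction on `r` shows that `F r` is generated by the generators of dimension at
least `r`; by monotonicity of `d` these all come later in the list.
-/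

section IdealPowers

variable {R : Type*} [Ring R] {J : Ideal R} [J.IsTwoSided]

theorem Ideal.mul_mem_pow_add {a b : ℕ} {x y : R} (hx : x ∈ J ^ a) (hy : y ∈ J ^ b) :
    x * y ∈ J ^ (a + b) := by
  rw [Ideal.IsTwoSided.pow_add]
  exact Ideal.mul_mem_mul hx hy

theorem Ideal.pow_mem_pow_mul {a : ℕ} {x : R} (hx : x ∈ J ^ a) (m : ℕ) :
    x ^ m ∈ J ^ (a * m) := by
  induction m with
  | zero => simp [Submodule.pow_zero, Ideal.one_eq_top]
  | succ m ih => simpa only [pow_succ, Nat.mul_succ] using Ideal.mul_mem_pow_add ih hx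

theorem Ideal.pow_char_sub_one_mem {p : ℕ} [Fact p.Prime] [CharP R p] {a : ℕ} {x : R}
    (hx : x - 1 ∈ J ^ a) : x ^ p - 1 ∈ J ^ (a * p) := by
  simpa only [sub_pow_char_of_commute p (Commute.one_right x), one_pow] using
    Ideal.pow_mem_pow_mul hx p

end IdealPowers

namespace MonoidAlgebra

variable {k G : Type*} [CommRing k] [Group G]

theorem of_commutatorElement_sub_one_mem {J : Ideal (MonoidAlgebra k G)} [J.IsTwoSided]
    {a b : ℕ} {x y : G}
    (hx : of k G x - 1 ∈ J ^ a) (hy : of k G y - 1 ∈ J ^ b) :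
    of k G ⁅x, y⁆ - 1 ∈ J ^ (a + b) := by
  have hcomm : of k G (x * y) - of k G (y * x) =
      (of k G x - 1) * (of k G y - 1) - (of k G y - 1) * (of k G x - 1) := by
    simp only [map_mul]
    noncomm_ring
  have hfactor :
      of k G ⁅x, y⁆ - 1 = (of k G (x * y) - of k G (y * x)) * of k G (x⁻¹ * y⁻¹) := by
    rw [sub_mul, ← map_mul, ← map_mul, ← map_one (of k G), commutatorElement_def]
    congr 2 <;> group
  rw [hfactor, hcomm]
  refine Ideal.mul_mem_right _ _ (sub_mem (Ideal.mul_mem_pow_add hx hy) ?_)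
  rw [add_comm]
  exact Ideal.mul_mem_pow_add hy hx

theorem eq_one_of_of_sub_one_mem_pow [Nontrivial k] {J : Ideal (MonoidAlgebra k G)} {N r : ℕ}
    (hN : J ^ N = ⊥) (hr : N ≤ r) {x : G} (hx : of k G x - 1 ∈ J ^ r) : x = 1 := by
  have hbot : of k G x - 1 ∈ (⊥ : Ideal (MonoidAlgebra k G)) :=
    hN ▸ Ideal.pow_le_pow_right hr hx
  rw [Ideal.mem_bot, sub_eq_zero, ← map_one (of k G)] at hbot
  exact of_injective hbot

end MonoidAlgebra

section Layers

variable {G ι : Type*} [Group G] {F : ℕ → Set G} {g : ι → G} {d : ι → ℕ}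

theorem subset_closure_image_of_layers {N : ℕ} (htriv : ∀ r, N ≤ r → F r ⊆ {1})
    (hgen : ∀ r, 1 ≤ r → (Subgroup.closure (g '' {i | d i = r} ∪ F (r + 1)) : Set G) = F r) :
    ∀ r, 1 ≤ r → F r ⊆ Subgroup.closure (g '' {i | r ≤ d i}) := by
  suffices ∀ m r, 1 ≤ r → N ≤ r + m → F r ⊆ Subgroup.closure (g '' {i | r ≤ d i}) from
    fun r hr => this N r hr (by omega)
  intro m
  induction m with
  | zero =>
    intro r _ hNr
    exact (htriv r (by omega)).trans (by simp)
  | succ m ih =>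
    intro r hr hNr
    rw [← hgen r hr, SetLike.coe_subset_coe, Subgroup.closure_le]
    rintro x (⟨i, hi, rfl⟩ | hx)
    · exact Subgroup.subset_closure ⟨i, hi.ge, rfl⟩
    · refine Subgroup.closure_mono ?_ (ih (r + 1) (by omega) (by omega) hx)
      exact Set.image_mono fun i (hi : r + 1 ≤ d i) => (by omega : r ≤ d i)

theorem closure_image_le_closure_later [LinearOrder ι] (hd : Monotone d) {i : ι} {r : ℕ}
    (hr : d i < r) :
    Subgroup.closure (g '' {j | r ≤ d j}) ≤ Subgroup.closure {x | ∃ j, i < j ∧ x = g j} := by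
  refine Subgroup.closure_mono ?_
  rintro _ ⟨j, hj, rfl⟩
  exact ⟨j, hd.reflect_lt (hr.trans_le hj), rfl⟩

end Layers

theorem jennings_pc_generators_give_pc_presentation_general
    (p : ℕ) (hp : p.Prime) (G : Type*) [Group G] [Fintype G]
    (n : ℕ)
    (J : Ideal (MonoidAlgebra (ZMod p) G))
    (hJ : J = (⊥ : Ideal (MonoidAlgebra (ZMod p) G)).jacobson)
    -- the dimension subgroups, as sets: F r = {g | g - 1 ∈ J^r}
    (F : ℕ → Set G)
    (hF : ∀ r, F r = {x : G | MonoidAlgebra.of (ZMod p) G x - 1 ∈ J ^ r})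
    -- Jennings pc-generators with nondecreasing dimensions d
    (g : Fin n → G) (d : Fin n → ℕ)
    (hd1 : ∀ i, 1 ≤ d i) (hmono : Monotone d)
    (hmem : ∀ i, g i ∈ F (d i))
    -- for each r, the generators of dimension r together with F_{r+1} generate F_r …
    (hgen : ∀ r, 1 ≤ r →
      (Subgroup.closure ((g '' {i | d i = r}) ∪ F (r + 1)) : Set G) = F r) :
    (∀ i : Fin n,
      g i ^ p ∈ Subgroup.closure {x : G | ∃ j : Fin n, i < j ∧ x = g j}) ∧
    (∀ i j : Fin n, i < j →
      ⁅g i, g j⁆ ∈ Subgroup.closure {x : G | ∃ l : Fin n, j < l ∧ x = g l}) := by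
  have := Fact.mk hp
  have : Finite (MonoidAlgebra (ZMod p) G) := Module.finite_of_finite (ZMod p)
  have : CharP (MonoidAlgebra (ZMod p) G) p :=
    charP_of_injective_algebraMap (algebraMap (ZMod p) _).injective p
  have : J.IsTwoSided := hJ ▸ inferInstance
  obtain ⟨N, hN⟩ : IsNilpotent J := hJ ▸ IsArtinianRing.isNilpotent_jacobson_bot
  have hF' {r : ℕ} {x : G} : x ∈ F r ↔ MonoidAlgebra.of (ZMod p) G x - 1 ∈ J ^ r := by
    rw [hF]; rfl
  have hdeep : ∀ r, 1 ≤ r → F r ⊆ Subgroup.closure (g '' {i | r ≤ d i}) :=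
    subset_closure_image_of_layers
      (fun r hr x hx => MonoidAlgebra.eq_one_of_of_sub_one_mem_pow hN hr (hF'.1 hx)) hgen
  refine ⟨fun i => ?_, fun i j _ => ?_⟩
  · have hpow : g i ^ p ∈ F (d i + 1) := by
      rw [hF', map_pow]
      exact Ideal.pow_le_pow_right (by nlinarith [hp.two_le, hd1 i])
        (Ideal.pow_char_sub_one_mem (hF'.1 (hmem i)))
    exact closure_image_le_closure_later hmono (Nat.lt_succ_self _) (hdeep _ (by omega) hpow)
  · have hcomm : ⁅g i, g j⁆ ∈ F (d j + 1) :=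
      hF'.2 <| Ideal.pow_le_pow_right (by linarith [hd1 i])
        (MonoidAlgebra.of_commutatorElement_sub_one_mem (hF'.1 (hmem i)) (hF'.1 (hmem j)))
    exact closure_image_le_closure_later hmono (Nat.lt_succ_self _) (hdeep _ (by omega) hcomm)

/-- if `g 0, …, g (n-1)` are Jennings pc-generators for a group `G` of
order `p^n` (with nondecreasing dimensions `d i`, each `g i` lying in the `d i`-th
dimension subgroup but not the next, and the `g i` of dimension `r` mapping to a
minimal generating set of `F_r/F_{r+1}`), then `(g i)^p` lies in the subgroup
generated by the later generators, and so does every commutator `⁅g i, g j⁆` (`i < j`),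
in the subgroup generated by the generators after `g j`. -/
theorem jennings_pc_generators_give_pc_presentation
    (p : ℕ) (hp : p.Prime) (G : Type*) [Group G] [Fintype G] (hG : IsPGroup p G)
    (n : ℕ) (hcard : Fintype.card G = p ^ n)
    (J : Ideal (MonoidAlgebra (ZMod p) G))
    (hJ : J = (⊥ : Ideal (MonoidAlgebra (ZMod p) G)).jacobson)
    -- the dimension subgroups, as sets: F r = {g | g - 1 ∈ J^r}
    (F : ℕ → Set G)
    (hF : ∀ r, F r = {x : G | MonoidAlgebra.of (ZMod p) G x - 1 ∈ J ^ r})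
    -- Jennings pc-generators with nondecreasing dimensions d
    (g : Fin n → G) (d : Fin n → ℕ)
    (hd1 : ∀ i, 1 ≤ d i) (hmono : Monotone d)
    (hmem : ∀ i, g i ∈ F (d i)) (hnotmem : ∀ i, g i ∉ F (d i + 1))
    -- for each r, the generators of dimension r together with F_{r+1} generate F_r …
    (hgen : ∀ r, 1 ≤ r →
      (Subgroup.closure ((g '' {i | d i = r}) ∪ F (r + 1)) : Set G) = F r)
    -- … and minimally so: no proper subset of them (with F_{r+1}) generates F_r
    (hmin : ∀ r, 1 ≤ r → ∀ s : Set (Fin n), s ⊂ {i | d i = r} →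
      (Subgroup.closure ((g '' s) ∪ F (r + 1)) : Set G) ≠ F r) :
    (∀ i : Fin n,
      g i ^ p ∈ Subgroup.closure {x : G | ∃ j : Fin n, i < j ∧ x = g j}) ∧
    (∀ i j : Fin n, i < j →
      ⁅g i, g j⁆ ∈ Subgroup.closure {x : G | ∃ l : Fin n, j < l ∧ x = g l}) :=
  jennings_pc_generators_give_pc_presentation_general p hp G n J hJ F hF g d hd1 hmono hmem hgen
end

section
/- Let p be a prime, G a finite p-group, k = ZMod p, kG the group algebra with Jacobson radical J. For r ≥ 1 define F_r = {g ∈ G : (g : kG) - 1 ∈ J^r}. Then: (1) each F_r is a normal subgroup of G; (2) F_1 = G; (3) F_{r+1} ⊆ F_r for all r ≥ 1; (4) there exists N such that F_N is the trivial subgroup. -/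
/-!
The heart of the matter is `F₁ = G`, i.e. `g - 1 ∈ J`. On a simple
`𝔽_p[G]`-module `V`, whose order is a positive power of `p`, the `p`-group `G` has a nonzero fixed
vector; the fixed vectors form a submodule, so `G` acts trivially on `V`. Taking `V = 𝔽_p[G] ⧸ m`
puts `g - 1` in every maximal left ideal `m`. Normality holds because `F_r` is the kernel of
`G → 𝔽_p[G] ⧸ J^r` with `J^r` two-sided, and `F_N = 1` because the radical of the Artinian ring
`𝔽_p[G]` is nilpotent.
-/

open MonoidAlgebra

namespace MonoidAlgebra

variable (k G V : Type*) [CommSemiring k] [Monoid G] [AddCommMonoid V]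
  [Module (MonoidAlgebra k G) V]

def fixedSubmodule : Submodule (MonoidAlgebra k G) V where
  carrier := {v | ∀ g, of k G g • v = v}
  zero_mem' _ := smul_zero _
  add_mem' hv hw g := by rw [smul_add, hv g, hw g]
  smul_mem' r v hv := by
    induction r using MonoidAlgebra.induction_on with
    | of h => intro g; simp only [hv h, hv g]
    | add r s hr hs => intro g; rw [add_smul, smul_add, hr g, hs g]
    | smul c r hr =>
      intro g
      rw [Algebra.smul_def, mul_smul, ← mul_smul, ← Algebra.commutes, mul_smul, hr g]

end MonoidAlgebra

theorem prime_dvd_natCard_of_forall_nsmul_eq_zero {p : ℕ} [Fact p.Prime] {V : Type*}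
    [AddGroup V] [Finite V] [Nontrivial V] (h : ∀ v : V, p • v = 0) : p ∣ Nat.card V := by
  obtain ⟨v, hv⟩ := exists_ne (0 : V)
  exact addOrderOf_eq_prime (h v) hv ▸ addOrderOf_dvd_natCard v

namespace IsPGroup

variable {p : ℕ} [Fact p.Prime] {G : Type*} [Group G]

theorem fixedSubmodule_ne_bot (hG : IsPGroup p G) {V : Type*} [AddCommGroup V]
    [Module (MonoidAlgebra (ZMod p) G) V] [Finite V] [Nontrivial V] :
    fixedSubmodule (ZMod p) G V ≠ ⊥ := by
  let := MulAction.compHom V (of (ZMod p) G)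
  have hpV : p ∣ Nat.card V := prime_dvd_natCard_of_forall_nsmul_eq_zero fun v => by
    rw [← Nat.cast_smul_eq_nsmul (MonoidAlgebra (ZMod p) G),
      ← map_natCast (algebraMap (ZMod p) _), ZMod.natCast_self, map_zero, zero_smul]
  obtain ⟨v, hv, hv0⟩ :=
    hG.exists_fixed_point_of_prime_dvd_card_of_fixed_point V hpV (a := 0)
      fun g => show of (ZMod p) G g • (0 : V) = 0 from smul_zero _
  exact (Submodule.ne_bot_iff _).2 ⟨v, hv, hv0.symm⟩

theorem of_smul_eq_self_of_isSimpleModule (hG : IsPGroup p G) {V : Type*} [AddCommGroup V]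
    [Module (MonoidAlgebra (ZMod p) G) V] [IsSimpleModule (MonoidAlgebra (ZMod p) G) V] [Finite V]
    (g : G) (v : V) : of (ZMod p) G g • v = v := by
  have := IsSimpleModule.nontrivial (MonoidAlgebra (ZMod p) G) V
  have htop :=
    (eq_bot_or_eq_top (fixedSubmodule (ZMod p) G V)).resolve_left hG.fixedSubmodule_ne_bot
  exact (htop ▸ Submodule.mem_top : v ∈ fixedSubmodule (ZMod p) G V) g

theorem of_sub_one_mem_jacobson [Finite G] (hG : IsPGroup p G) (g : G) :
    of (ZMod p) G g - 1 ∈ Ring.jacobson (MonoidAlgebra (ZMod p) G) := by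
  rw [Ring.jacobson_eq_sInf_isMaximal]
  refine Submodule.mem_sInf.2 fun m hm => ?_
  have := isSimpleModule_iff_isCoatom.2 (Ideal.isMaximal_def.1 hm)
  have : Finite (MonoidAlgebra (ZMod p) G) := Module.finite_of_finite (ZMod p)
  have : Finite (MonoidAlgebra (ZMod p) G ⧸ m) := Quotient.finite _
  rw [← Submodule.Quotient.eq]
  simpa [← Submodule.Quotient.mk_smul] using
    hG.of_smul_eq_self_of_isSimpleModule g (Submodule.Quotient.mk (p := m) 1)

end IsPGroup

theorem MonoidHom.coe_ker_quotientMk_comp {R G : Type*} [Ring R] [Group G] (f : G →* R)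
    (I : Ideal R) [I.IsTwoSided] :
    ((((Ideal.Quotient.mk I).toMonoidHom).comp f).ker : Set G) = {g | f g - 1 ∈ I} := by
  ext g
  rw [SetLike.mem_coe, MonoidHom.mem_ker, Set.mem_ofPred_eq, ← Ideal.Quotient.eq, map_one]
  rfl

/-- the dimension subgroups `F_r = {g : G | g - 1 ∈ J^r}` of a finite
`p`-group form a descending series of normal subgroups starting at `G` and eventually
reaching the trivial subgroup. -/
theorem dimension_subgroups_form_normal_series
    (p : ℕ) (hp : p.Prime) (G : Type*) [Group G] [Fintype G] (hG : IsPGroup p G)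
    (J : Ideal (MonoidAlgebra (ZMod p) G))
    (hJ : J = (⊥ : Ideal (MonoidAlgebra (ZMod p) G)).jacobson)
    (F : ℕ → Set G)
    (hF : ∀ r, F r = {x : G | MonoidAlgebra.of (ZMod p) G x - 1 ∈ J ^ r}) :
    -- (1) each F_r (r ≥ 1) is a normal subgroup of G
    (∀ r : ℕ, 1 ≤ r → ∃ H : Subgroup G, H.Normal ∧ (H : Set G) = F r) ∧
    -- (2) F_1 = G
    (F 1 = Set.univ) ∧
    -- (3) F_{r+1} ⊆ F_r for every r ≥ 1
    (∀ r : ℕ, 1 ≤ r → F (r + 1) ⊆ F r) ∧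
    -- (4) some F_N is trivial
    (∃ N : ℕ, 1 ≤ N ∧ F N = {(1 : G)}) := by
  have := Fact.mk hp
  have : IsArtinianRing (MonoidAlgebra (ZMod p) G) := IsArtinianRing.of_finite (ZMod p) _
  rw [Ideal.jacobson_bot] at hJ
  subst hJ
  obtain ⟨N, hN⟩ : ∃ N, Ring.jacobson (MonoidAlgebra (ZMod p) G) ^ N = ⊥ :=
    Ideal.jacobson_bot (R := MonoidAlgebra (ZMod p) G) ▸ IsArtinianRing.isNilpotent_jacobson_bot
  simp only [hF]
  refine ⟨fun r _ => ⟨_, MonoidHom.normal_ker _, MonoidHom.coe_ker_quotientMk_comp _ _⟩,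
    Set.eq_univ_of_forall fun g => ?_, fun r _ g hg => Ideal.pow_le_pow_right r.le_succ hg,
    ⟨N + 1, le_add_self, ?_⟩⟩
  · rw [Set.mem_ofPred_eq, Submodule.pow_one]
    exact hG.of_sub_one_mem_jacobson g
  · have hN1 : Ring.jacobson (MonoidAlgebra (ZMod p) G) ^ (N + 1) = ⊥ :=
      le_bot_iff.1 (hN ▸ Ideal.pow_le_pow_right N.le_succ)
    ext g
    rw [Set.mem_ofPred_eq, hN1, Ideal.mem_bot, sub_eq_zero, ← map_one (of (ZMod p) G),
      of_injective.eq_iff, Set.mem_singleton_iff]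
end
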